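/- (Key algebraic computation in the proof of Theorem 2.19) Let S be a 4-dimensional linear subspace of ℝ⁷, let π denote the orthogonal projection of ℝ⁷ onto S^⊥, and let π^T = id − π. Fix U, V ∈ S. Define N(X;Y,Z,T) = (⟨U,Y⟩⟨V,Z⟩ − ⟨U,Z⟩⟨V,Y⟩)⟨χ(U,V,πX), T⟩ + (⟨U,Z⟩⟨V,T⟩ − ⟨U,T⟩⟨V,Z⟩)⟨χ(U,V,πX), Y⟩ + (⟨U,T⟩⟨V,Y⟩ − ⟨U,Y⟩⟨V,T⟩)⟨χ(U,V,πX), Z⟩, and the quadrilinear map D(X,Y,Z,T) = N(X;Y,Z,T) − N(Y;X,Z,T) + N(Z;X,Y,T) − N(T;X,Y,Z). Then for every orthonormal basis {g₁,g₂,g₃,g₄} of S: (1/12) Σ_{m,n,p=1}^7 D( π(χ(e_m,e_n,e_p)) − π^T(χ(e_m,e_n,e_p)), e_m, e_n, e_p ) = Σ_{a=1}^4 ‖π(χ(U,V,g_a))‖². -/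

import Mathlib

open scoped RealInnerProductSpace

noncomputable section

abbrev E7 : Type := EuclideanSpace ℝ (Fin 7)

/-- The standard orthonormal basis vectors of ℝ⁷. -/
def e7 (i : Fin 7) : E7 := EuclideanSpace.single i 1

/-- Kronecker delta. -/
def kd7 (i j : Fin 7) : ℝ := if i = j then 1 else 0

/-- `e^{abc}(e_i, e_j, e_k)` : component of a wedge of three dual basis covectors. -/
def trip7 (a b c i j k : Fin 7) : ℝ :=
  Matrix.det !![kd7 a i, kd7 a j, kd7 a k;
                kd7 b i, kd7 b j, kd7 b k;
                kd7 c i, kd7 c j, kd7 c k]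

/-- `e^{abcd}(e_i, e_j, e_k, e_l)` : component of a wedge of four dual basis covectors. -/
def quad7 (a b c d i j k l : Fin 7) : ℝ :=
  Matrix.det !![kd7 a i, kd7 a j, kd7 a k, kd7 a l;
                kd7 b i, kd7 b j, kd7 b k, kd7 b l;
                kd7 c i, kd7 c j, kd7 c k, kd7 c l;
                kd7 d i, kd7 d j, kd7 d k, kd7 d l]

/-- Components `φ_{ijk}` of the standard G₂ 3-form
`φ = e¹²³ + e¹⁴⁵ − e¹⁶⁷ + e²⁴⁶ − e²⁷⁵ + e³⁴⁷ − e³⁵⁶` (indices shifted to be 0-based). -/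
def phiC (i j k : Fin 7) : ℝ :=
  trip7 0 1 2 i j k + trip7 0 3 4 i j k - trip7 0 5 6 i j k
  + trip7 1 3 5 i j k - trip7 1 6 4 i j k + trip7 2 3 6 i j k - trip7 2 4 5 i j k

/-- Components `ψ_{ijkl}` of the Hodge dual 4-form
`ψ = e⁴⁵⁶⁷ − e²³⁴⁵ + e²³⁶⁷ − e³¹⁴⁶ + e³¹⁷⁵ − e¹²⁴⁷ + e¹²⁵⁶` (0-based). -/
def psiC (i j k l : Fin 7) : ℝ :=
  quad7 3 4 5 6 i j k l - quad7 1 2 3 4 i j k l + quad7 1 2 5 6 i j k l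
  - quad7 2 0 3 5 i j k l + quad7 2 0 6 4 i j k l
  - quad7 0 1 3 6 i j k l + quad7 0 1 4 5 i j k l

/-- The standard G₂ 3-form evaluated on arbitrary vectors. -/
def phi7 (x y z : E7) : ℝ := ∑ i, ∑ j, ∑ k, x i * y j * z k * phiC i j k

/-- The 4-form ψ evaluated on arbitrary vectors. -/
def psi7 (x y z w : E7) : ℝ :=
  ∑ i, ∑ j, ∑ k, ∑ l, x i * y j * z k * w l * psiC i j k l

/-- The cross product on ℝ⁷, characterized by `⟨x × y, z⟩ = φ(x,y,z)`. -/
def cross7 (x y : E7) : E7 := (WithLp.equiv 2 (Fin 7 → ℝ)).symm fun k => phi7 x y (e7 k)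

/-- The vector-valued 3-form χ, characterized by `⟨χ(x,y,z), w⟩ = ψ(x,y,z,w)`. -/
def chi7 (x y z : E7) : E7 := (WithLp.equiv 2 (Fin 7 → ℝ)).symm fun l => psi7 x y z (e7 l)

/-- Orthogonal projection `π` of ℝ⁷ onto `Sᗮ`. -/
def projPerp (S : Submodule ℝ E7) (x : E7) : E7 := (Sᗮ.orthogonalProjectionOnto x : E7)

/-- Tangential projection `π^T = id − π`. -/
def projTan (S : Submodule ℝ E7) (x : E7) : E7 := x - projPerp S x

/-- The map `N(X; Y,Z,T)` built from `U, V` and the projection `pr = π`. -/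
def Nform (U V : E7) (pr : E7 → E7) (X Y Z T : E7) : ℝ :=
  (⟪U, Y⟫ * ⟪V, Z⟫ - ⟪U, Z⟫ * ⟪V, Y⟫) * ⟪chi7 U V (pr X), T⟫
  + (⟪U, Z⟫ * ⟪V, T⟫ - ⟪U, T⟫ * ⟪V, Z⟫) * ⟪chi7 U V (pr X), Y⟫
  + (⟪U, T⟫ * ⟪V, Y⟫ - ⟪U, Y⟫ * ⟪V, T⟫) * ⟪chi7 U V (pr X), Z⟫

/-- The quadrilinear map `D(X,Y,Z,T) = N(X;Y,Z,T) − N(Y;X,Z,T) + N(Z;X,Y,T) − N(T;X,Y,Z)`. -/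
def Dform (U V : E7) (pr : E7 → E7) (X Y Z T : E7) : ℝ :=
  Nform U V pr X Y Z T - Nform U V pr Y X Z T
  + Nform U V pr Z X Y T - Nform U V pr T X Y Z


/-!
Write `X_{mnp} = π χ_{mnp} − π^T χ_{mnp}`. This is the reflection of `χ_{mnp}` in `Sᗮ`, so it is
alternating in `(m, n, p)` and `π X_{mnp} = π χ_{mnp}`. Relabelling the summation indices, the sum
of `D` becomes `3 Σ N(X; e_m, e_n, e_p) − 3 Σ N(e_m; X, e_n, e_p)`, and each `N` splits into three
cyclic pieces, of which only three distinct sums remain. In each of them the coefficients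
`⟨U, e_i⟩`, `⟨V, e_j⟩` are contracted into the multilinear `χ`, using only that `ψ` is alternating
and that `U, V ∈ S`. Writing `C = χ(U, V, ·)`, which is skew-adjoint, and `P = π`, everything
becomes a trace: the left side equals `tr(PCPC) − tr(PCC)`, and so does
`Σ_a ‖P C g_a‖² = −tr(C P C (1 − P))`, since `1 − P` is the projection onto `S = span g`.
-/

open Finset

lemma quad7_perm (σ : Equiv.Perm (Fin 4)) (a b c d : Fin 7) (v : Fin 4 → Fin 7) :
    quad7 a b c d (v (σ 0)) (v (σ 1)) (v (σ 2)) (v (σ 3))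
      = σ.sign * quad7 a b c d (v 0) (v 1) (v 2) (v 3) := by
  have h (w : Fin 4 → Fin 7) : quad7 a b c d (w 0) (w 1) (w 2) (w 3)
      = (Matrix.of fun r s => kd7 (![a, b, c, d] r) (w s)).det := by
    unfold quad7; congr 1; ext r s; fin_cases r <;> fin_cases s <;> rfl
  calc _ = (Matrix.of fun r s => kd7 (![a, b, c, d] r) (v (σ s))).det := h (v ∘ σ)
    _ = _ := by rw [h v, ← Matrix.det_permute']; rfl

lemma psiC_perm (σ : Equiv.Perm (Fin 4)) (v : Fin 4 → Fin 7) :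
    psiC (v (σ 0)) (v (σ 1)) (v (σ 2)) (v (σ 3))
      = σ.sign * psiC (v 0) (v 1) (v 2) (v 3) := by
  simp only [psiC, quad7_perm]
  ring

lemma psiC_swap_01 (i j k l : Fin 7) : psiC j i k l = -psiC i j k l := by
  simpa [Equiv.swap_apply_of_ne_of_ne] using psiC_perm (Equiv.swap 0 1) ![i, j, k, l]

lemma psiC_swap_12 (i j k l : Fin 7) : psiC i k j l = -psiC i j k l := by
  simpa [Equiv.swap_apply_of_ne_of_ne] using psiC_perm (Equiv.swap 1 2) ![i, j, k, l]

lemma psiC_swap_23 (i j k l : Fin 7) : psiC i j l k = -psiC i j k l := by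
  simpa [Equiv.swap_apply_of_ne_of_ne] using psiC_perm (Equiv.swap 2 3) ![i, j, k, l]

lemma psi7_swap_01 (x y z w : E7) : psi7 y x z w = -psi7 x y z w := by
  simp only [psi7, ← sum_neg_distrib]
  rw [sum_comm]
  refine sum_congr rfl fun i _ => sum_congr rfl fun j _ => sum_congr rfl fun k _ =>
    sum_congr rfl fun l _ => ?_
  rw [psiC_swap_01]; ring

lemma psi7_swap_12 (x y z w : E7) : psi7 x z y w = -psi7 x y z w := by
  simp only [psi7, ← sum_neg_distrib]
  refine sum_congr rfl fun i _ => ?_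
  rw [sum_comm]
  refine sum_congr rfl fun j _ => sum_congr rfl fun k _ => sum_congr rfl fun l _ => ?_
  rw [psiC_swap_12]; ring

lemma psi7_swap_23 (x y z w : E7) : psi7 x y w z = -psi7 x y z w := by
  simp only [psi7, ← sum_neg_distrib]
  refine sum_congr rfl fun i _ => sum_congr rfl fun j _ => ?_
  rw [sum_comm]
  refine sum_congr rfl fun k _ => sum_congr rfl fun l _ => ?_
  rw [psiC_swap_23]; ring

lemma chi7_apply (x y z : E7) (l : Fin 7) :
    chi7 x y z l = ∑ i, ∑ j, ∑ k, x i * y j * z k * psiC i j k l := by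
  simp [chi7, psi7, e7, PiLp.single_apply]

lemma inner_chi7 (x y z w : E7) : ⟪chi7 x y z, w⟫ = psi7 x y z w := by
  simp only [PiLp.inner_apply, RCLike.inner_apply, conj_trivial, chi7_apply, psi7, mul_sum]
  rw [sum_comm]
  refine sum_congr rfl fun i _ => ?_
  rw [sum_comm]
  refine sum_congr rfl fun j _ => ?_
  rw [sum_comm]
  exact sum_congr rfl fun k _ => sum_congr rfl fun l _ => by ring

lemma chi7_swap_01 (x y z : E7) : chi7 y x z = -chi7 x y z := by
  ext l; exact psi7_swap_01 x y z (e7 l)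

lemma chi7_swap_12 (x y z : E7) : chi7 x z y = -chi7 x y z := by
  ext l; exact psi7_swap_12 x y z (e7 l)

lemma chi7_rotate (x y z : E7) : chi7 y z x = chi7 x y z := by
  rw [chi7_swap_12, chi7_swap_01, neg_neg]

lemma inner_chi7_swap (x y z w : E7) : ⟪chi7 x y z, w⟫ = -⟪chi7 x y w, z⟫ := by
  rw [inner_chi7, inner_chi7, psi7_swap_23]

lemma inner_chi7_middle_sub (U V x y : E7) :
    ⟪V, chi7 x U y⟫ - ⟪U, chi7 x V y⟫ = -2 * ⟪chi7 U V x, y⟫ := by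
  rw [real_inner_comm _ V, real_inner_comm _ U, inner_chi7_swap, inner_chi7_swap x V,
    chi7_swap_12 x U V, inner_neg_left, ← chi7_rotate x U V]
  ring

def chi7ₗ (x y : E7) : E7 →ₗ[ℝ] E7 where
  toFun := chi7 x y
  map_add' z z' := by
    ext l
    simp [chi7_apply, add_mul, mul_add, sum_add_distrib]
  map_smul' c z := by
    ext l
    simp only [chi7_apply, PiLp.smul_apply, smul_eq_mul, RingHom.id_apply, mul_sum]
    exact sum_congr rfl fun i _ => sum_congr rfl fun j _ => sum_congr rfl fun k _ => by ring

lemma chi7ₗ_apply (x y z : E7) : chi7ₗ x y z = chi7 x y z := rfl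

lemma inner_chi7ₗ_left (x y z w : E7) : ⟪chi7ₗ x y z, w⟫ = -⟪z, chi7ₗ x y w⟫ := by
  rw [chi7ₗ_apply, chi7ₗ_apply, inner_chi7_swap, real_inner_comm]

lemma OrthonormalBasis.sum_inner_smul_apply {ι E M : Type*} [Fintype ι] [NormedAddCommGroup E]
    [InnerProductSpace ℝ E] [AddCommGroup M] [Module ℝ M] (b : OrthonormalBasis ι ℝ E)
    (f : E →ₗ[ℝ] M) (x : E) : ∑ i, ⟪x, b i⟫ • f (b i) = f x := by
  conv_rhs => rw [← b.sum_repr' x]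
  simp [real_inner_comm]

lemma e7_eq_basisFun : e7 = EuclideanSpace.basisFun (Fin 7) ℝ := by
  funext i; simp [e7]

lemma sum_inner_e7_mul_inner_e7 (x y : E7) : ∑ p, ⟪x, e7 p⟫ * ⟪y, e7 p⟫ = ⟪x, y⟫ := by
  simp_rw [real_inner_comm _ y, e7_eq_basisFun]
  exact (EuclideanSpace.basisFun (Fin 7) ℝ).sum_inner_mul_inner x y

lemma trace_eq_sum_inner_e7 (T : Module.End ℝ E7) :
    LinearMap.trace ℝ E7 T = ∑ i, ⟪e7 i, T (e7 i)⟫ := by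
  rw [LinearMap.trace_eq_sum_inner T (EuclideanSpace.basisFun (Fin 7) ℝ), e7_eq_basisFun]

lemma chi7_contract_right (x y z : E7) : ∑ p, ⟪z, e7 p⟫ • chi7 x y (e7 p) = chi7 x y z := by
  rw [e7_eq_basisFun]
  exact (EuclideanSpace.basisFun (Fin 7) ℝ).sum_inner_smul_apply (chi7ₗ x y) z

lemma chi7_contract_left (x y z : E7) : ∑ m, ⟪x, e7 m⟫ • chi7 (e7 m) y z = chi7 x y z := by
  simp_rw [← chi7_rotate _ y z]
  exact chi7_contract_right y z x

lemma chi7_contract_middle (x y z : E7) : ∑ n, ⟪y, e7 n⟫ • chi7 x (e7 n) z = chi7 x y z := by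
  simp_rw [chi7_rotate z x]
  exact chi7_contract_right z x y

lemma sum_wedge_smul_chi7 (U V z : E7) :
    ∑ m, ∑ n, (⟪U, e7 m⟫ * ⟪V, e7 n⟫ - ⟪U, e7 n⟫ * ⟪V, e7 m⟫) • chi7 (e7 m) (e7 n) z
      = (2 : ℝ) • chi7 U V z := by
  have h (x y : E7) :
      ∑ m, ∑ n, (⟪x, e7 m⟫ * ⟪y, e7 n⟫) • chi7 (e7 m) (e7 n) z = chi7 x y z := by
    simp_rw [mul_smul, ← smul_sum, chi7_contract_middle, chi7_contract_left]
  simp_rw [sub_smul, sum_sub_distrib, h, mul_comm ⟪U, e7 _⟫, h, chi7_swap_01 U V]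
  rw [sub_neg_eq_add, two_smul]

lemma sum_wedge_smul_chi7_right (U V x : E7) :
    ∑ n, ∑ p, (⟪U, e7 n⟫ * ⟪V, e7 p⟫ - ⟪U, e7 p⟫ * ⟪V, e7 n⟫) • chi7 x (e7 n) (e7 p)
      = (2 : ℝ) • chi7 U V x := by
  simp_rw [← chi7_rotate x]
  exact sum_wedge_smul_chi7 U V x

lemma starProjection_reflection {E : Type*} [NormedAddCommGroup E] [InnerProductSpace ℝ E]
    (K : Submodule ℝ E) [K.HasOrthogonalProjection] (x : E) :
    K.starProjection (K.reflection x) = K.starProjection x := by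
  rw [Submodule.reflection_apply, map_sub, map_nsmul,
    K.starProjection_eq_self_iff.mpr (K.starProjection_apply_mem x), two_smul,
    add_sub_cancel_right]

lemma inner_reflection_orthogonal_of_mem {E : Type*} [NormedAddCommGroup E]
    [InnerProductSpace ℝ E] {K : Submodule ℝ E} [K.HasOrthogonalProjection] {u : E} (hu : u ∈ K)
    (x : E) : ⟪u, Kᗮ.reflection x⟫ = -⟪u, x⟫ := by
  calc ⟪u, Kᗮ.reflection x⟫ = ⟪Kᗮ.reflection (-u), Kᗮ.reflection x⟫ := by
        rw [map_neg, Submodule.reflection_mem_subspace_orthogonal_precomplement_eq_neg hu, neg_neg]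
    _ = -⟪u, x⟫ := by rw [LinearIsometryEquiv.inner_map_map, inner_neg_left]

lemma Orthonormal.sum_inner_apply_eq_trace {ι E : Type*} [Fintype ι] [NormedAddCommGroup E]
    [InnerProductSpace ℝ E] [FiniteDimensional ℝ E] {g : ι → E} (hg : Orthonormal ℝ g)
    (T : Module.End ℝ E) :
    ∑ i, ⟪g i, T (g i)⟫
      = LinearMap.trace ℝ E (T * (Submodule.span ℝ (Set.range g)).starProjection) := by
  have hb : Orthonormal ℝ (Module.Basis.span hg.linearIndependent) :=
    (Submodule.span ℝ (Set.range g)).subtypeₗᵢ.orthonormal_comp_iff.mp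
      (by simpa [Function.comp_def, Module.Basis.span_apply] using hg)
  set b := (Module.Basis.span hg.linearIndependent).toOrthonormalBasis hb
  have hbg (i : ι) : (b i : E) = g i := by simp [b, Module.Basis.span_apply]
  rw [Module.End.mul_eq_comp, Submodule.starProjection, ContinuousLinearMap.toLinearMap_comp,
    ← LinearMap.comp_assoc, LinearMap.trace_comp_comm', LinearMap.trace_eq_sum_inner _ b]
  simp only [LinearMap.comp_apply, ContinuousLinearMap.coe_coe,
    Submodule.inner_orthogonalProjectionOnto_eq_of_mem_left, Submodule.subtypeL_apply, hbg]

section Relabel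

variable {ι β : Type*} [Fintype ι] [AddCommMonoid β] {f g : ι → ι → ι → β}

lemma sum_comm_01_of (h : ∀ a b c, f b a c = g a b c) :
    ∑ a, ∑ b, ∑ c, f a b c = ∑ a, ∑ b, ∑ c, g a b c := by
  rw [sum_comm]
  exact sum_congr rfl fun a _ => sum_congr rfl fun b _ => sum_congr rfl fun c _ => h a b c

lemma sum_comm_12_of (h : ∀ a b c, f a c b = g a b c) :
    ∑ a, ∑ b, ∑ c, f a b c = ∑ a, ∑ b, ∑ c, g a b c := by
  refine sum_congr rfl fun a _ => ?_
  rw [sum_comm]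
  exact sum_congr rfl fun b _ => sum_congr rfl fun c _ => h a b c

lemma sum_rotate_of (h : ∀ a b c, f b c a = g a b c) :
    ∑ a, ∑ b, ∑ c, f a b c = ∑ a, ∑ b, ∑ c, g a b c :=
  (sum_comm_12_of fun _ _ _ => rfl).trans (sum_comm_01_of h)

end Relabel

lemma projPerp_apply (S : Submodule ℝ E7) (x : E7) : projPerp S x = Sᗮ.starProjection x := rfl

def reflChi (S : Submodule ℝ E7) (m n p : Fin 7) : E7 :=
  Sᗮ.reflection (chi7 (e7 m) (e7 n) (e7 p))

lemma projPerp_sub_projTan_chi7 (S : Submodule ℝ E7) (m n p : Fin 7) :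
    projPerp S (chi7 (e7 m) (e7 n) (e7 p)) - projTan S (chi7 (e7 m) (e7 n) (e7 p))
      = reflChi S m n p := by
  rw [reflChi, Submodule.reflection_apply, projTan, projPerp_apply, two_smul]
  abel

lemma reflChi_swap_01 (S : Submodule ℝ E7) (m n p : Fin 7) :
    reflChi S n m p = -reflChi S m n p := by
  rw [reflChi, chi7_swap_01, map_neg, reflChi]

lemma reflChi_swap_12 (S : Submodule ℝ E7) (m n p : Fin 7) :
    reflChi S m p n = -reflChi S m n p := by
  rw [reflChi, chi7_swap_12, map_neg, reflChi]

lemma reflChi_rotate (S : Submodule ℝ E7) (m n p : Fin 7) :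
    reflChi S n p m = reflChi S m n p := by
  rw [reflChi, chi7_rotate, reflChi]

def Nterm (U V : E7) (pr : E7 → E7) (X Y Z T : E7) : ℝ :=
  (⟪U, Y⟫ * ⟪V, Z⟫ - ⟪U, Z⟫ * ⟪V, Y⟫) * ⟪chi7 U V (pr X), T⟫

lemma Nform_eq (U V : E7) (pr : E7 → E7) (X Y Z T : E7) :
    Nform U V pr X Y Z T
      = Nterm U V pr X Y Z T + Nterm U V pr X Z T Y + Nterm U V pr X T Y Z :=
  rfl

lemma Nform_neg (U V : E7) (pr : E7 → E7) (W X Y Z : E7) :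
    Nform U V pr W (-X) Y Z = -Nform U V pr W X Y Z := by
  simp only [Nform, inner_neg_right]; ring

lemma Nterm_neg_swap (U V : E7) (pr : E7 → E7) (W Y Z T : E7) :
    Nterm U V pr W Y (-Z) T = Nterm U V pr W Z Y T := by
  simp only [Nterm, inner_neg_right]; ring

section Computation

variable (S : Submodule ℝ E7) (U V : E7)

lemma sum_Nform_reflChi_first :
    ∑ m, ∑ n, ∑ p, Nform U V (projPerp S) (reflChi S m n p) (e7 m) (e7 n) (e7 p)
      = 3 * ∑ m, ∑ n, ∑ p, Nterm U V (projPerp S) (reflChi S m n p) (e7 m) (e7 n) (e7 p) := by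
  have h₁ : ∑ m, ∑ n, ∑ p, Nterm U V (projPerp S) (reflChi S m n p) (e7 n) (e7 p) (e7 m)
      = ∑ m, ∑ n, ∑ p, Nterm U V (projPerp S) (reflChi S m n p) (e7 m) (e7 n) (e7 p) :=
    (sum_rotate_of fun m n p => by rw [reflChi_rotate]).symm
  have h₂ : ∑ m, ∑ n, ∑ p, Nterm U V (projPerp S) (reflChi S m n p) (e7 p) (e7 m) (e7 n)
      = ∑ m, ∑ n, ∑ p, Nterm U V (projPerp S) (reflChi S m n p) (e7 n) (e7 p) (e7 m) :=
    (sum_rotate_of fun m n p => by rw [reflChi_rotate]).symm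
  simp only [Nform_eq, sum_add_distrib]
  rw [h₂, h₁]
  ring

lemma sum_Nform_reflChi_second :
    ∑ m, ∑ n, ∑ p, Nform U V (projPerp S) (e7 m) (reflChi S m n p) (e7 n) (e7 p)
      = 2 * ∑ m, ∑ n, ∑ p, Nterm U V (projPerp S) (e7 m) (reflChi S m n p) (e7 n) (e7 p)
        + ∑ m, ∑ n, ∑ p, Nterm U V (projPerp S) (e7 m) (e7 n) (e7 p) (reflChi S m n p) := by
  have h : ∑ m, ∑ n, ∑ p, Nterm U V (projPerp S) (e7 m) (e7 p) (reflChi S m n p) (e7 n)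
      = ∑ m, ∑ n, ∑ p, Nterm U V (projPerp S) (e7 m) (reflChi S m n p) (e7 n) (e7 p) :=
    sum_comm_12_of fun m n p => by rw [reflChi_swap_12, Nterm_neg_swap]
  simp only [Nform_eq, sum_add_distrib]
  rw [h]
  ring

lemma sum_Dform_reflChi :
    ∑ m, ∑ n, ∑ p, Dform U V (projPerp S) (reflChi S m n p) (e7 m) (e7 n) (e7 p)
      = 3 * ∑ m, ∑ n, ∑ p, Nterm U V (projPerp S) (reflChi S m n p) (e7 m) (e7 n) (e7 p)
        - 3 * (2 * ∑ m, ∑ n, ∑ p, Nterm U V (projPerp S) (e7 m) (reflChi S m n p) (e7 n) (e7 p)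
          + ∑ m, ∑ n, ∑ p, Nterm U V (projPerp S) (e7 m) (e7 n) (e7 p) (reflChi S m n p)) := by
  have h_n : ∑ m, ∑ n, ∑ p, Nform U V (projPerp S) (e7 n) (reflChi S m n p) (e7 m) (e7 p)
      = ∑ m, ∑ n, ∑ p, -Nform U V (projPerp S) (e7 m) (reflChi S m n p) (e7 n) (e7 p) :=
    sum_comm_01_of fun m n p => by rw [reflChi_swap_01, Nform_neg]
  have h_p : ∑ m, ∑ n, ∑ p, Nform U V (projPerp S) (e7 p) (reflChi S m n p) (e7 m) (e7 n)
      = ∑ m, ∑ n, ∑ p, Nform U V (projPerp S) (e7 m) (reflChi S m n p) (e7 n) (e7 p) :=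
    sum_rotate_of fun m n p => by rw [reflChi_rotate]
  simp only [Dform, sum_add_distrib, sum_sub_distrib]
  rw [h_n, h_p]
  simp only [sum_neg_distrib]
  rw [sum_Nform_reflChi_first, sum_Nform_reflChi_second]
  ring

local notation "𝒫" => (Submodule.starProjection Sᗮ : Module.End ℝ E7)
local notation "𝒞" => chi7ₗ U V

lemma sum_Nterm_reflChi_first :
    ∑ m, ∑ n, ∑ p, Nterm U V (projPerp S) (reflChi S m n p) (e7 m) (e7 n) (e7 p)
      = 2 * LinearMap.trace ℝ E7 (𝒫 * 𝒞 * 𝒞) := by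
  calc _ = ∑ p, ∑ m, ∑ n, (⟪U, e7 m⟫ * ⟪V, e7 n⟫ - ⟪U, e7 n⟫ * ⟪V, e7 m⟫)
          * ⟪𝒞 (Sᗮ.starProjection (chi7 (e7 m) (e7 n) (e7 p))), e7 p⟫ :=
        sum_rotate_of fun m n p => by
          rw [Nterm, reflChi, projPerp_apply, starProjection_reflection, chi7ₗ_apply]
    _ = ∑ p, ⟪𝒞 (Sᗮ.starProjection (∑ m, ∑ n, (⟪U, e7 m⟫ * ⟪V, e7 n⟫ - ⟪U, e7 n⟫ * ⟪V, e7 m⟫)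
          • chi7 (e7 m) (e7 n) (e7 p))), e7 p⟫ := by
        simp only [map_sum, map_smul, sum_inner, real_inner_smul_left]
    _ = 2 * ∑ p, ⟪e7 p, (𝒞 * 𝒫 * 𝒞) (e7 p)⟫ := by
        simp only [sum_wedge_smul_chi7, map_smul, real_inner_smul_left, mul_sum,
          real_inner_comm _ (e7 _), Module.End.mul_apply, ContinuousLinearMap.coe_coe, chi7ₗ_apply]
    _ = _ := by
        rw [← trace_eq_sum_inner_e7, LinearMap.trace_mul_cycle, LinearMap.trace_mul_cycle]

lemma sum_Nterm_reflChi_second (hU : U ∈ S) (hV : V ∈ S) :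
    ∑ m, ∑ n, ∑ p, Nterm U V (projPerp S) (e7 m) (reflChi S m n p) (e7 n) (e7 p)
      = 2 * LinearMap.trace ℝ E7 (𝒫 * 𝒞 * 𝒞) := by
  calc _ = ∑ m, ∑ p, ∑ n, (⟪U, e7 n⟫ * ⟪V, chi7 (e7 m) (e7 n) (e7 p)⟫
          - ⟪V, e7 n⟫ * ⟪U, chi7 (e7 m) (e7 n) (e7 p)⟫) * ⟪𝒞 (Sᗮ.starProjection (e7 m)), e7 p⟫ :=
        sum_comm_12_of fun m n p => by
          rw [Nterm, reflChi, inner_reflection_orthogonal_of_mem hU,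
            inner_reflection_orthogonal_of_mem hV, projPerp_apply, chi7ₗ_apply]
          ring
    _ = ∑ m, ∑ p, (⟪V, ∑ n, ⟪U, e7 n⟫ • chi7 (e7 m) (e7 n) (e7 p)⟫
          - ⟪U, ∑ n, ⟪V, e7 n⟫ • chi7 (e7 m) (e7 n) (e7 p)⟫)
          * ⟪𝒞 (Sᗮ.starProjection (e7 m)), e7 p⟫ := by
        simp only [inner_sum, real_inner_smul_right, sub_mul, sum_sub_distrib, sum_mul]
    _ = ∑ m, -2 * ∑ p, ⟪𝒞 (e7 m), e7 p⟫ * ⟪𝒞 (Sᗮ.starProjection (e7 m)), e7 p⟫ := by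
        simp only [chi7_contract_middle, inner_chi7_middle_sub, mul_sum, mul_assoc, chi7ₗ_apply]
    _ = 2 * ∑ m, ⟪e7 m, (𝒫 * 𝒞 * 𝒞) (e7 m)⟫ := by
        simp only [sum_inner_e7_mul_inner_e7, mul_sum]
        refine sum_congr rfl fun m _ => ?_
        rw [real_inner_comm, inner_chi7ₗ_left, Submodule.inner_starProjection_left_eq_right]
        simp only [Module.End.mul_apply, ContinuousLinearMap.coe_coe]
        ring
    _ = _ := by rw [← trace_eq_sum_inner_e7]

lemma sum_Nterm_reflChi_last :
    ∑ m, ∑ n, ∑ p, Nterm U V (projPerp S) (e7 m) (e7 n) (e7 p) (reflChi S m n p)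
      = 2 * LinearMap.trace ℝ E7 (𝒫 * 𝒞 * 𝒞) - 4 * LinearMap.trace ℝ E7 (𝒫 * 𝒞 * 𝒫 * 𝒞) := by
  calc _ = ∑ m, ⟪𝒞 (Sᗮ.starProjection (e7 m)), Sᗮ.reflection (∑ n, ∑ p,
          (⟪U, e7 n⟫ * ⟪V, e7 p⟫ - ⟪U, e7 p⟫ * ⟪V, e7 n⟫) • chi7 (e7 m) (e7 n) (e7 p))⟫ := by
        simp only [Nterm, reflChi, map_sum, map_smul, inner_sum, real_inner_smul_right,
          projPerp_apply, chi7ₗ_apply]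
    _ = ∑ m, 2 * (2 * ⟪𝒞 (Sᗮ.starProjection (e7 m)), Sᗮ.starProjection (𝒞 (e7 m))⟫
          - ⟪𝒞 (Sᗮ.starProjection (e7 m)), 𝒞 (e7 m)⟫) := by
        refine sum_congr rfl fun m _ => ?_
        simp only [sum_wedge_smul_chi7_right, Submodule.reflection_apply, two_smul, map_add,
          inner_sub_right, inner_add_right, chi7ₗ_apply]
        ring
    _ = ∑ m, (2 * ⟪e7 m, (𝒫 * 𝒞 * 𝒞) (e7 m)⟫ - 4 * ⟪e7 m, (𝒫 * 𝒞 * 𝒫 * 𝒞) (e7 m)⟫) := by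
        refine sum_congr rfl fun m _ => ?_
        simp only [inner_chi7ₗ_left, Submodule.inner_starProjection_left_eq_right,
          Module.End.mul_apply, ContinuousLinearMap.coe_coe]
        ring
    _ = _ := by
        rw [sum_sub_distrib, ← mul_sum, ← mul_sum, trace_eq_sum_inner_e7, trace_eq_sum_inner_e7]

lemma sum_norm_sq_projPerp_chi7 {ι : Type*} [Fintype ι] {g : ι → E7} (hg : Orthonormal ℝ g)
    (hspan : Submodule.span ℝ (Set.range g) = S) :
    ∑ a, ‖projPerp S (chi7 U V (g a))‖ ^ 2
      = LinearMap.trace ℝ E7 (𝒫 * 𝒞 * 𝒫 * 𝒞) - LinearMap.trace ℝ E7 (𝒫 * 𝒞 * 𝒞) := by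
  have hnorm (w : E7) : ‖projPerp S w‖ ^ 2 = ⟪w, Sᗮ.starProjection w⟫ := by
    rw [← real_inner_self_eq_norm_sq, projPerp_apply, Submodule.inner_starProjection_left_eq_right,
      Sᗮ.starProjection_eq_self_iff.mpr (Sᗮ.starProjection_apply_mem w)]
  have hQ : (S.starProjection : Module.End ℝ E7) = 1 - 𝒫 := by
    rw [Submodule.starProjection_orthogonal' S]
    simp
  calc _ = -∑ a, ⟪g a, (𝒞 * 𝒫 * 𝒞) (g a)⟫ := by
        simp only [hnorm, ← sum_neg_distrib, ← chi7ₗ_apply, inner_chi7ₗ_left, Module.End.mul_apply,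
          ContinuousLinearMap.coe_coe]
    _ = _ := by
        rw [hg.sum_inner_apply_eq_trace, hspan, hQ, mul_sub, mul_one, map_sub,
          LinearMap.trace_mul_cycle, LinearMap.trace_mul_cycle,
          LinearMap.trace_mul_cycle ℝ (𝒞 * 𝒫), ← mul_assoc]
        ring

end Computation

theorem key_computation_coassoc_general (S : Submodule ℝ E7)
    (U V : E7) (hU : U ∈ S) (hV : V ∈ S)
    (g : Fin 4 → E7) (hg : Orthonormal ℝ g)
    (hspan : Submodule.span ℝ (Set.range g) = S) :
    (1/12 : ℝ) * ∑ m : Fin 7, ∑ n : Fin 7, ∑ p : Fin 7,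
        Dform U V (projPerp S)
          (projPerp S (chi7 (e7 m) (e7 n) (e7 p)) - projTan S (chi7 (e7 m) (e7 n) (e7 p)))
          (e7 m) (e7 n) (e7 p)
      = ∑ a : Fin 4, ‖projPerp S (chi7 U V (g a))‖ ^ 2 := by
  simp only [projPerp_sub_projTan_chi7]
  rw [sum_Dform_reflChi, sum_Nterm_reflChi_first, sum_Nterm_reflChi_second S U V hU hV,
    sum_Nterm_reflChi_last, sum_norm_sq_projPerp_chi7 S U V hg hspan]
  ring

/-- Key algebraic computation in the proof of Theorem 2.19. -/
theorem key_computation_coassoc (S : Submodule ℝ E7) (hS : Module.finrank ℝ S = 4)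
    (U V : E7) (hU : U ∈ S) (hV : V ∈ S)
    (g : Fin 4 → E7) (hg : Orthonormal ℝ g) (hgS : ∀ a, g a ∈ S)
    (hspan : Submodule.span ℝ (Set.range g) = S) :
    (1/12 : ℝ) * ∑ m : Fin 7, ∑ n : Fin 7, ∑ p : Fin 7,
        Dform U V (projPerp S)
          (projPerp S (chi7 (e7 m) (e7 n) (e7 p)) - projTan S (chi7 (e7 m) (e7 n) (e7 p)))
          (e7 m) (e7 n) (e7 p)
      = ∑ a : Fin 4, ‖projPerp S (chi7 U V (g a))‖ ^ 2 :=
  key_computation_coassoc_general S U V hU hV g hg hspan
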